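/- For every N >= 2: if an FTNS system is FT(N-1)S strongly hyperbolic (i.e. for some choice of reduction parameters there exist M' > 0 and, for each unit s in R^3, a Hermitian H(s) with H(s) P_{N-1}(s) = P_{N-1}(s)* H(s) and M'^{-1} I <= H(s) <= M' I), then the system is FTNS strongly hyperbolic: there exist M > 0 and, for each unit s, a Hermitian H_N(s) with H_N(s) P_N(s) = P_N(s)* H_N(s) and M^{-1} I <= H_N(s) <= M I; one may take M = M' and H_N(s) equal to the diagonal block of H(s) corresponding to the components (s^i d_i, v^1, ..., v^{N-1}) after the orthogonal change of variables splitting d_i into its components parallel and orthogonal to s. -/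

import Mathlib

/-!
In the variables `(s^i dᵢ, v¹, …, v^{N-1})` the reduced symbol restricts to the full one: the
embedding `J = JN N n s` is an isometry because `|s| = 1`, and `J P_N(s) = P_{N-1}(s) J`, since the
only additional terms are quadratic forms `s_k s_j D̄^{kj}` of antisymmetric reduction parameters,
which vanish. Compressing a symmetrizer `H` of `P_{N-1}(s)` to `Jᴴ H J` therefore keeps it
Hermitian, keeps the symmetrizer identity, and keeps the Loewner bounds.
-/

open Matrix
open scoped ComplexOrder

/-- The Loewner order `A ≤ B` for complex matrices: `B - A` is positive semidefinite. -/
def loewnerLE {n : Type*} [Fintype n] (A B : Matrix n n ℂ) : Prop := (B - A).PosSemidef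

/-- Index type for the FTNS state `(v⁰, …, v^{N-1})`. -/
abbrev IN (N : ℕ) (n : ℕ → ℕ) : Type := Σ μ : Fin N, Fin (n μ)

/-- Index type for the FT(N-1)S reduction state `(dᵢ; v⁰, v¹, …, v^{N-1})`. -/
abbrev INm1 (N : ℕ) (n : ℕ → ℕ) : Type := (Fin 3 × Fin (n 0)) ⊕ IN N n

variable (N : ℕ) (n : ℕ → ℕ)
  (A : (μ ν : ℕ) → (Fin (μ - ν + 1) → Fin 3) → Matrix (Fin (n μ)) (Fin (n ν)) ℂ)
  (A' : (μ : ℕ) → Matrix (Fin (n μ)) (Fin (n (μ + 1))) ℂ)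
  (B10 : (μ : ℕ) → (Fin μ → Fin 3) → Matrix (Fin (n μ)) (Fin (n 0)) ℂ)
  (D0 : Fin 3 → Matrix (Fin (n 0)) (Fin (n 0)) ℂ)
  (Dbar0 : Fin 3 → Fin 3 → Matrix (Fin (n 0)) (Fin (n 0)) ℂ)
  (Dd : Fin 3 → Fin 3 → Matrix (Fin (n 0)) (Fin (n 0)) ℂ)
  (Dbard : Fin 3 → Fin 3 → Fin 3 → Matrix (Fin (n 0)) (Fin (n 0)) ℂ)
  (DH : (μ : ℕ) → (Fin μ → Fin 3) → Matrix (Fin (n μ)) (Fin (n 0)) ℂ)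
  (DbarH : (μ : ℕ) → (Fin (μ - 1) → Fin 3) → Fin 3 → Fin 3 →
    Matrix (Fin (n μ)) (Fin (n 0)) ℂ)

/-- The FTNS principal symbol `P_N(s)`: the `(μ,ν)` block is
`(A^μ_ν)^{k₁…k_{μ-ν+1}} s_{k₁} ⋯ s_{k_{μ-ν+1}}` for `ν ≤ μ`, `A^μ_{μ+1}` for
`ν = μ+1`, and `0` otherwise. -/
noncomputable def PN (s : Fin 3 → ℝ) : Matrix (IN N n) (IN N n) ℂ :=
  Matrix.of fun r c =>
    if h1 : (c.1 : ℕ) ≤ (r.1 : ℕ) then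
      ∑ k : Fin ((r.1 : ℕ) - (c.1 : ℕ) + 1) → Fin 3,
        (∏ t, (s (k t) : ℂ)) * A r.1 c.1 k r.2 c.2
    else if h2 : (c.1 : ℕ) = (r.1 : ℕ) + 1 then
      A' r.1 r.2 (Fin.cast (congrArg n h2) c.2)
    else 0

/-- The principal symbol `P_{N-1}(s)` of the FT(N-1)S reduction, in the variables
`(v⁰, dᵢ, v¹, …, v^{N-1})`, with reduction parameters
`D⁰, D̄⁰, Dᵢ^k, D̄ᵢ^{kj}, D^μ, D̄^μ`. -/
noncomputable def PNm1 (s : Fin 3 → ℝ) : Matrix (INm1 N n) (INm1 N n) ℂ :=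
  Matrix.of fun r c =>
    match r, c with
    | Sum.inl (i, m), Sum.inl (j, m') =>
        (s i : ℂ) * A 0 0 (fun _ => j) m m' + ∑ k, (s k : ℂ) * Dbard i k j m m'
    | Sum.inl (i, m), Sum.inr ⟨ν, q⟩ =>
        if h0 : (ν : ℕ) = 0 then
          ∑ k, (s k : ℂ) *
            ((if i = k then B10 0 Fin.elim0 else 0) + Dd i k) m (Fin.cast (congrArg n h0) q)
        else if h1 : (ν : ℕ) = 1 then
          (s i : ℂ) * A' 0 m (Fin.cast (congrArg n h1) q)
        else 0
    | Sum.inr ⟨μ, m⟩, Sum.inl (j, m') =>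
        if h0 : (μ : ℕ) = 0 then
          ∑ k, (s k : ℂ) * Dbar0 k j (Fin.cast (congrArg n h0) m) m'
        else
          (∑ K : Fin (μ : ℕ) → Fin 3, (∏ t, (s (K t) : ℂ)) *
              A μ 0 (fun t : Fin ((μ : ℕ) - 0 + 1) =>
                if h : (t : ℕ) < (μ : ℕ) then K ⟨t, h⟩ else j) m m')
            + (∑ K : Fin ((μ : ℕ) - 1) → Fin 3, ∑ a, (∏ t, (s (K t) : ℂ)) * (s a : ℂ) *
                DbarH μ K a j m m')
    | Sum.inr ⟨μ, m⟩, Sum.inr ⟨ν, q⟩ =>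
        if h0 : (μ : ℕ) = 0 then
          (if hc : (ν : ℕ) = 0 then
            ∑ k, (s k : ℂ) *
              (A 0 0 (fun _ => k) + D0 k) (Fin.cast (congrArg n h0) m)
                (Fin.cast (congrArg n hc) q)
          else 0)
        else if hc : (ν : ℕ) = 0 then
          ∑ K : Fin (μ : ℕ) → Fin 3, (∏ t, (s (K t) : ℂ)) *
            ((B10 μ K + DH μ K) m (Fin.cast (congrArg n hc) q))
        else PN N n A A' s ⟨μ, m⟩ ⟨ν, q⟩

/-- The isometric embedding of the components `(s^i dᵢ, v¹, …, v^{N-1})` into the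
FT(N-1)S state space; compressing a matrix on the FT(N-1)S state space by this embedding
yields its diagonal block corresponding to `(s^i dᵢ, v¹, …, v^{N-1})` in the orthogonal
change of variables splitting `dᵢ` into components parallel and orthogonal to `s`. -/
noncomputable def JN (s : Fin 3 → ℝ) : Matrix (INm1 N n) (IN N n) ℂ :=
  Matrix.of fun r c =>
    match r with
    | Sum.inl (i, m) =>
        if h : (c.1 : ℕ) = 0 then
          (s i : ℂ) * (if m = Fin.cast (congrArg n h) c.2 then 1 else 0)
        else 0
    | Sum.inr ⟨μ, m⟩ =>
        if (μ : ℕ) = 0 then 0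
        else if h : μ = c.1 then
          (if m = Fin.cast (congrArg (fun x : Fin N => n (x : ℕ)) h).symm c.2
            then 1 else 0)
        else 0

section Symmetrizer

variable {ι κ : Type*} [Fintype ι] [Fintype κ] [DecidableEq ι] [DecidableEq κ]

def IsSymmetrizer (M : ℝ) (H P : Matrix ι ι ℂ) : Prop :=
  H.IsHermitian ∧ H * P = Pᴴ * H ∧
    loewnerLE (((M⁻¹ : ℝ) : ℂ) • 1) H ∧ loewnerLE H (((M : ℝ) : ℂ) • 1)

omit [DecidableEq ι] [DecidableEq κ] in
theorem loewnerLE.conjTranspose_mul_mul_same {A B : Matrix ι ι ℂ} (h : loewnerLE A B)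
    (J : Matrix ι κ ℂ) : loewnerLE (Jᴴ * A * J) (Jᴴ * B * J) := by
  unfold loewnerLE at h ⊢
  rw [← Matrix.sub_mul, ← Matrix.mul_sub]
  exact h.conjTranspose_mul_mul_same J

theorem IsSymmetrizer.conjTranspose_mul_mul {M : ℝ} {H Q : Matrix κ κ ℂ} {P : Matrix ι ι ℂ}
    {J : Matrix κ ι ℂ} (h : IsSymmetrizer M H Q) (hJ : Jᴴ * J = 1) (hJPQ : J * P = Q * J) :
    IsSymmetrizer M (Jᴴ * H * J) P := by
  obtain ⟨hHerm, hHQ, hlow, hupp⟩ := h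
  have compress_scalar (c : ℂ) : Jᴴ * (c • (1 : Matrix κ κ ℂ)) * J = c • 1 := by
    rw [Matrix.mul_smul, Matrix.smul_mul, Matrix.mul_one, hJ]
  refine ⟨isHermitian_conjTranspose_mul_mul J hHerm, ?_, ?_, ?_⟩
  · calc Jᴴ * H * J * P = Jᴴ * (H * Q) * J := by
          rw [Matrix.mul_assoc, hJPQ, ← Matrix.mul_assoc, Matrix.mul_assoc Jᴴ]
      _ = (Q * J)ᴴ * H * J := by
          rw [hHQ, conjTranspose_mul]; simp only [Matrix.mul_assoc]
      _ = Pᴴ * (Jᴴ * H * J) := by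
          rw [← hJPQ, conjTranspose_mul]; simp only [Matrix.mul_assoc]
  · simpa only [compress_scalar] using hlow.conjTranspose_mul_mul_same J
  · simpa only [compress_scalar] using hupp.conjTranspose_mul_mul_same J

end Symmetrizer

theorem sum_sum_mul_mul_eq_zero_of_antisymm {α R : Type*} [Fintype α] [CommRing R]
    [IsAddTorsionFree R] (w : α → R) (f : α → α → R) (hf : ∀ a b, f a b = -f b a) :
    ∑ b, (∑ a, w a * f a b) * w b = 0 := by
  simp only [Finset.sum_mul]
  refine self_eq_neg.mp ?_
  calc ∑ b, ∑ a, w a * f a b * w b = ∑ a, ∑ b, w a * f a b * w b := Finset.sum_comm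
    _ = -∑ b, ∑ a, w a * f a b * w b := by
        simp only [← Finset.sum_neg_distrib]
        refine Finset.sum_congr rfl fun a _ => Finset.sum_congr rfl fun b _ => ?_
        rw [hf a b]; ring

theorem Fin.snoc_eq_dite {α : Type*} {μ : ℕ} (K : Fin μ → α) (j : α) :
    (Fin.snoc K j : Fin (μ + 1) → α) =
      fun t : Fin (μ + 1) => if h : (t : ℕ) < μ then K ⟨t, h⟩ else j := by
  funext t
  by_cases h : (t : ℕ) < μ
  · rw [dif_pos h]
    exact Fin.snoc_castSucc (α := fun _ => α) (i := ⟨t, h⟩) ..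
  · rw [dif_neg h, Fin.eq_last_of_not_lt h]
    exact Fin.snoc_last (α := fun _ => α) ..

theorem Fintype.sum_fin_succ_pi {α R : Type*} [Fintype α] [AddCommMonoid R] (μ : ℕ)
    (F : (Fin (μ + 1) → α) → R) :
    ∑ k, F k = ∑ j, ∑ K : Fin μ → α, F fun t => if h : (t : ℕ) < μ then K ⟨t, h⟩ else j := by
  rw [← Fintype.sum_prod_type', ← (Fin.snocEquiv fun _ => α).sum_comp]
  exact Fintype.sum_congr _ _ fun p => congrArg F (Fin.snoc_eq_dite p.2 p.1)

theorem Fin.prod_dite_lt {M : Type*} [CommMonoid M] {α : Type*} (w : α → M) {μ : ℕ}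
    (K : Fin μ → α) (j : α) :
    ∏ t : Fin (μ + 1), w (if h : (t : ℕ) < μ then K ⟨t, h⟩ else j) = (∏ t, w (K t)) * w j := by
  rw [Fin.prod_univ_castSucc]
  simp only [Fin.val_castSucc, Fin.is_lt, ↓reduceDIte, Fin.val_last, lt_self_iff_false, Fin.eta]

section Reduction

variable {N n} {α : Type*} (s : Fin 3 → ℝ)

theorem JN_inl_apply (hN : 0 < N) (i : Fin 3) (m : Fin (n 0)) (c : IN N n) :
    JN N n s (.inl (i, m)) c = s i * (1 : Matrix (IN N n) (IN N n) ℂ) ⟨⟨0, hN⟩, m⟩ c := by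
  rcases c with ⟨⟨_ | ν, hν⟩, q⟩ <;> simp [JN, one_apply, eq_comm]

theorem JN_inr_apply_of_ne_zero {μ : Fin N} (hμ : (μ : ℕ) ≠ 0) (m : Fin (n μ)) (c : IN N n) :
    JN N n s (.inr ⟨μ, m⟩) c = (1 : Matrix (IN N n) (IN N n) ℂ) ⟨μ, m⟩ c := by
  rcases c with ⟨ν, q⟩
  by_cases hμν : μ = ν
  · subst hμν; simp [JN, hμ, one_apply]
  · simp [JN, hμ, hμν, one_apply]

theorem JN_inr_apply_of_eq_zero {μ : Fin N} (hμ : (μ : ℕ) = 0) (m : Fin (n μ)) (c : IN N n) :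
    JN N n s (.inr ⟨μ, m⟩) c = 0 := by
  simp [JN, hμ]

theorem JN_inr_apply_of_col_ne_zero (x c : IN N n) (hc : (c.1 : ℕ) ≠ 0) :
    JN N n s (.inr x) c = (1 : Matrix (IN N n) (IN N n) ℂ) x c := by
  by_cases hx : (x.1 : ℕ) = 0
  · rw [JN_inr_apply_of_eq_zero s hx, one_apply_ne]
    rintro rfl; exact hc hx
  · exact JN_inr_apply_of_ne_zero s hx x.2 c

theorem JN_inr_apply_col_zero (hN : 0 < N) (x : IN N n) (q : Fin (n 0)) :
    JN N n s (.inr x) ⟨⟨0, hN⟩, q⟩ = 0 := by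
  rcases x with ⟨μ, m⟩
  by_cases hμ : (μ : ℕ) = 0 <;> simp [JN, hμ, Fin.ext_iff]

theorem JN_mul_apply_inl (hN : 0 < N) (X : Matrix (IN N n) α ℂ) (i : Fin 3) (m : Fin (n 0))
    (c : α) : (JN N n s * X) (.inl (i, m)) c = s i * X ⟨⟨0, hN⟩, m⟩ c := by
  simp [mul_apply, JN_inl_apply s hN, one_apply]

theorem JN_mul_apply_inr_of_ne_zero {μ : Fin N} (hμ : (μ : ℕ) ≠ 0) (X : Matrix (IN N n) α ℂ)
    (m : Fin (n μ)) (c : α) : (JN N n s * X) (.inr ⟨μ, m⟩) c = X ⟨μ, m⟩ c := by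
  simp [mul_apply, JN_inr_apply_of_ne_zero s hμ, one_apply]

theorem JN_mul_apply_inr_of_eq_zero {μ : Fin N} (hμ : (μ : ℕ) = 0) (X : Matrix (IN N n) α ℂ)
    (m : Fin (n μ)) (c : α) : (JN N n s * X) (.inr ⟨μ, m⟩) c = 0 := by
  simp only [mul_apply, JN_inr_apply_of_eq_zero s hμ, zero_mul, Finset.sum_const_zero]

theorem mul_JN_apply_zero (hN : 0 < N) (X : Matrix α (INm1 N n) ℂ) (r : α) (q : Fin (n 0)) :
    (X * JN N n s) r ⟨⟨0, hN⟩, q⟩ = ∑ j, X r (.inl (j, q)) * s j := by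
  rw [mul_apply, Fintype.sum_sum_type, Fintype.sum_prod_type]
  simp [JN_inl_apply s hN, JN_inr_apply_col_zero s hN, one_apply]

theorem mul_JN_apply_of_ne_zero (X : Matrix α (INm1 N n) ℂ) (r : α) {ν : Fin N}
    (hν : (ν : ℕ) ≠ 0) (q : Fin (n ν)) :
    (X * JN N n s) r ⟨ν, q⟩ = X r (.inr ⟨ν, q⟩) := by
  rw [mul_apply, Fintype.sum_sum_type]
  simp [JN_inl_apply s ν.pos, JN_inr_apply_of_col_ne_zero s _ ⟨ν, q⟩ hν, one_apply, Fin.ext_iff,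
    Ne.symm hν]

theorem JN_conjTranspose_mul_self (hs : ∑ i, s i ^ 2 = 1) : (JN N n s)ᴴ * JN N n s = 1 := by
  ext c ⟨⟨_ | ν, hν⟩, q⟩
  · have hs' : ∑ j, (s j : ℂ) * s j = 1 := by
      simpa [sq] using congrArg ((↑) : ℝ → ℂ) hs
    rw [mul_JN_apply_zero s hν]
    calc ∑ j, (JN N n s)ᴴ c (.inl (j, q)) * s j
        = ∑ j, (s j : ℂ) * s j * (1 : Matrix (IN N n) (IN N n) ℂ) c ⟨⟨0, hν⟩, q⟩ := by
          refine Finset.sum_congr rfl fun j _ => ?_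
          rw [conjTranspose_apply, JN_inl_apply s hν, star_mul', ← conjTranspose_apply,
            conjTranspose_one, Complex.star_def, Complex.conj_ofReal]
          ring
      _ = (1 : Matrix (IN N n) (IN N n) ℂ) c ⟨⟨0, hν⟩, q⟩ := by rw [← Finset.sum_mul, hs', one_mul]
  · rw [mul_JN_apply_of_ne_zero s _ _ ν.succ_ne_zero, conjTranspose_apply,
      JN_inr_apply_of_ne_zero s ν.succ_ne_zero]
    simp [one_apply, eq_comm]

end Reduction

section Intertwining

variable {N n A A' B10 D0 Dbar0 Dd Dbard DH DbarH} (s : Fin 3 → ℝ)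

theorem PN_apply_zero_right (hN : 0 < N) (μ : Fin N) (m : Fin (n μ)) (q : Fin (n 0)) :
    PN N n A A' s ⟨μ, m⟩ ⟨⟨0, hN⟩, q⟩ = ∑ j, (∑ K : Fin μ → Fin 3, (∏ t, (s (K t) : ℂ)) *
      A μ 0 (fun t : Fin (μ - 0 + 1) => if h : (t : ℕ) < μ then K ⟨t, h⟩ else j) m q) * s j := by
  simp only [PN, of_apply, dif_pos (Nat.zero_le _)]
  refine (Fintype.sum_fin_succ_pi μ _).trans (Finset.sum_congr rfl fun j _ => ?_)
  rw [Finset.sum_mul]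
  refine Finset.sum_congr rfl fun K _ => ?_
  rw [mul_right_comm, ← Fin.prod_dite_lt (fun x => (s x : ℂ)) K j]
  rfl

theorem JN_mul_PN_apply_inl (hDbard : ∀ i k j, Dbard i k j = -Dbard i j k) (i : Fin 3)
    (m : Fin (n 0)) (c : IN N n) :
    (JN N n s * PN N n A A' s) (.inl (i, m)) c =
      (PNm1 N n A A' B10 D0 Dbar0 Dd Dbard DH DbarH s * JN N n s) (.inl (i, m)) c := by
  rcases c with ⟨⟨_ | _ | ν, hν⟩, q⟩
  · have hDbard_form := sum_sum_mul_mul_eq_zero_of_antisymm (fun k => (s k : ℂ))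
      (fun k j => Dbard i k j m q) fun a b => by simp [hDbard i a b]
    rw [JN_mul_apply_inl s hν, mul_JN_apply_zero s hν, PN_apply_zero_right s hν]
    simp [PNm1, add_mul, Finset.sum_add_distrib, hDbard_form, Finset.mul_sum, mul_assoc]
  · rw [JN_mul_apply_inl s (by omega), mul_JN_apply_of_ne_zero s _ _ one_ne_zero]
    simp [PN, PNm1]
  · rw [JN_mul_apply_inl s (by omega), mul_JN_apply_of_ne_zero s _ _ (by simp)]
    simp [PN, PNm1]

theorem JN_mul_PN_apply_inr (hDbar0 : ∀ k j, Dbar0 k j = -Dbar0 j k)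
    (hDbarH : ∀ μ K a j, DbarH μ K a j = -DbarH μ K j a) (x c : IN N n) :
    (JN N n s * PN N n A A' s) (.inr x) c =
      (PNm1 N n A A' B10 D0 Dbar0 Dd Dbard DH DbarH s * JN N n s) (.inr x) c := by
  rcases x with ⟨⟨_ | μ, hμ⟩, m⟩ <;> rcases c with ⟨⟨_ | ν, hν⟩, q⟩
  · rw [JN_mul_apply_inr_of_eq_zero s rfl, mul_JN_apply_zero s hν]
    simpa [PNm1] using (sum_sum_mul_mul_eq_zero_of_antisymm (fun k => (s k : ℂ))
      (fun k j => Dbar0 k j m q) fun a b => by simp [hDbar0 a b]).symm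
  · rw [JN_mul_apply_inr_of_eq_zero s rfl, mul_JN_apply_of_ne_zero s _ _ ν.succ_ne_zero]
    simp [PNm1]
  · have hDbarH_form : ∑ j, (∑ K : Fin μ → Fin 3, ∑ a, (∏ t, (s (K t) : ℂ)) * s a *
        DbarH (μ + 1) K a j m q) * s j = 0 := by
      calc _ = ∑ K : Fin μ → Fin 3, (∏ t, (s (K t) : ℂ)) *
              ∑ j, (∑ a, (s a : ℂ) * DbarH (μ + 1) K a j m q) * s j := by
            simp only [Finset.sum_mul, Finset.mul_sum, mul_assoc]
            exact Finset.sum_comm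
        _ = 0 := Finset.sum_eq_zero fun K _ => by
            rw [sum_sum_mul_mul_eq_zero_of_antisymm _ _ fun a b => by simp [hDbarH (μ + 1) K a b],
              mul_zero]
    rw [JN_mul_apply_inr_of_ne_zero s μ.succ_ne_zero, mul_JN_apply_zero s hν,
      PN_apply_zero_right s hν]
    simp [PNm1, add_mul, Finset.sum_add_distrib, hDbarH_form]
  · rw [JN_mul_apply_inr_of_ne_zero s μ.succ_ne_zero,
      mul_JN_apply_of_ne_zero s _ _ ν.succ_ne_zero]
    simp [PNm1]

theorem JN_mul_PN (hDbar0 : ∀ k j, Dbar0 k j = -Dbar0 j k)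
    (hDbard : ∀ i k j, Dbard i k j = -Dbard i j k)
    (hDbarH : ∀ μ K a j, DbarH μ K a j = -DbarH μ K j a) :
    JN N n s * PN N n A A' s = PNm1 N n A A' B10 D0 Dbar0 Dd Dbard DH DbarH s * JN N n s := by
  ext (⟨i, m⟩ | x) c
  · exact JN_mul_PN_apply_inl s hDbard i m c
  · exact JN_mul_PN_apply_inr s hDbar0 hDbarH x c

end Intertwining

theorem stmt_4
    (hDbar0 : ∀ k j, Dbar0 k j = -Dbar0 j k)
    (hDbard : ∀ i k j, Dbard i k j = -Dbard i j k)
    (hDbarH : ∀ μ K a j, DbarH μ K a j = -DbarH μ K j a)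
    (M' : ℝ) (hM' : 0 < M')
    (H : (Fin 3 → ℝ) → Matrix (INm1 N n) (INm1 N n) ℂ)
    (hH : ∀ s : Fin 3 → ℝ, (∑ i, s i ^ 2) = 1 →
      (H s).IsHermitian ∧
      H s * PNm1 N n A A' B10 D0 Dbar0 Dd Dbard DH DbarH s
        = (PNm1 N n A A' B10 D0 Dbar0 Dd Dbard DH DbarH s)ᴴ * H s ∧
      loewnerLE (((M'⁻¹ : ℝ) : ℂ) • 1) (H s) ∧
      loewnerLE (H s) (((M' : ℝ) : ℂ) • 1)) :
    (∃ M : ℝ, 0 < M ∧ ∀ s : Fin 3 → ℝ, (∑ i, s i ^ 2) = 1 →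
      ∃ HN : Matrix (IN N n) (IN N n) ℂ,
        HN.IsHermitian ∧
        HN * PN N n A A' s = (PN N n A A' s)ᴴ * HN ∧
        loewnerLE (((M⁻¹ : ℝ) : ℂ) • 1) HN ∧
        loewnerLE HN (((M : ℝ) : ℂ) • 1)) ∧
    (∀ s : Fin 3 → ℝ, (∑ i, s i ^ 2) = 1 →
      ((JN N n s)ᴴ * H s * JN N n s).IsHermitian ∧
      (JN N n s)ᴴ * H s * JN N n s * PN N n A A' s
        = (PN N n A A' s)ᴴ * ((JN N n s)ᴴ * H s * JN N n s) ∧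
      loewnerLE (((M'⁻¹ : ℝ) : ℂ) • 1) ((JN N n s)ᴴ * H s * JN N n s) ∧
      loewnerLE ((JN N n s)ᴴ * H s * JN N n s) (((M' : ℝ) : ℂ) • 1)) := by
  have key : ∀ s : Fin 3 → ℝ, (∑ i, s i ^ 2) = 1 →
      IsSymmetrizer M' ((JN N n s)ᴴ * H s * JN N n s) (PN N n A A' s) := fun s hs =>
    IsSymmetrizer.conjTranspose_mul_mul (hH s hs) (JN_conjTranspose_mul_self s hs)
      (JN_mul_PN s hDbar0 hDbard hDbarH)
  exact ⟨⟨M', hM', fun s hs => ⟨_, key s hs⟩⟩, key⟩
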